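/- Let K be a field and A, a ∈ K with A ≠ 0, A² ≠ 1 and a ≠ 0, and set B = A⁻¹ (so A ≠ B). If the Kauffman–Vogel coefficient γ = (B²·a − A²·a⁻¹)/(A − B) + A·B vanishes, then a = A or a = −A³. (This is the paper's conclusion in the Comments section that, for a multiplicative planar polynomial with μ ≠ 1, the only possible parameter choices are a = A or a = −A³.) -/

import Mathlib

/-! Clearing the denominators `(A - A⁻¹) · a · A²` turns `γ` into the quadratic
`a² + (A³ - A)·a - A⁴ = (a - A)(a + A³)` in `a`. -/

def kvGamma {K : Type*} [Field K] (A B a : K) : K :=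
  (B ^ 2 * a - A ^ 2 * a⁻¹) / (A - B) + A * B

section

variable {K : Type*} [Field K] {A a : K}

theorem kvGamma_inv_mul (hA : A ≠ 0) (ha : a ≠ 0) (hAB : A ≠ A⁻¹) :
    kvGamma A A⁻¹ a * ((A - A⁻¹) * a * A ^ 2) = (a - A) * (a + A ^ 3) := by
  have hAB' : A - A⁻¹ ≠ 0 := sub_ne_zero.mpr hAB
  rw [kvGamma, add_mul, ← mul_assoc, ← mul_assoc, div_mul_cancel₀ _ hAB']
  field_simp
  ring

theorem kvGamma_inv_eq_zero_iff (hA : A ≠ 0) (ha : a ≠ 0) (hAB : A ≠ A⁻¹) :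
    kvGamma A A⁻¹ a = 0 ↔ a = A ∨ a = -A ^ 3 := by
  have hden : (A - A⁻¹) * a * A ^ 2 ≠ 0 := by
    have := sub_ne_zero.mpr hAB
    positivity
  rw [← mul_left_injective₀ hden |>.eq_iff, zero_mul, kvGamma_inv_mul hA ha hAB,
    mul_eq_zero, sub_eq_zero, add_eq_zero_iff_eq_neg]

end

theorem kauffman_vogel_gamma_zero_cases_general
    (K : Type*) [Field K] (A B a : K) (hA : A ≠ 0)
    (ha : a ≠ 0) (hB : B = A⁻¹) (hAB : A ≠ B)
    (γ : K)
    (hγ : γ = (B ^ 2 * a - A ^ 2 * a⁻¹) / (A - B) + A * B)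
    (hγ0 : γ = 0) :
    a = A ∨ a = -A ^ 3 := by
  subst hB hγ
  exact (kvGamma_inv_eq_zero_iff hA ha hAB).mp hγ0

/-- Let `K` be a field and `A a : K` with `A ≠ 0`, `A² ≠ 1`, `a ≠ 0`, and set
`B = A⁻¹`. If the Kauffman–Vogel coefficient
`γ = (B²·a − A²·a⁻¹)/(A − B) + A·B` vanishes, then `a = A` or `a = −A³`. -/
theorem kauffman_vogel_gamma_zero_cases
    (K : Type*) [Field K] (A B a : K) (hA : A ≠ 0) (hA2 : A ^ 2 ≠ 1)
    (ha : a ≠ 0) (hB : B = A⁻¹) (hAB : A ≠ B)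
    (γ : K)
    (hγ : γ = (B ^ 2 * a - A ^ 2 * a⁻¹) / (A - B) + A * B)
    (hγ0 : γ = 0) :
    a = A ∨ a = -A ^ 3 :=
  kauffman_vogel_gamma_zero_cases_general K A B a hA ha hB hAB γ hγ hγ0
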